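/- arXiv:2406.07357 — 4 statements merged into one kernel-verified Lean document; each statement's English description precedes it below -/
import Mathlib

section
/- Removing a vertex u from a set S changes the motif cut by: cut_M(S\{u}) = cut_M(S) − M_1^S(u) + M_k^S(u). -/
open Finset

variable {V : Type*} [Fintype V] [DecidableEq V]

/-- Motif degree: number of motif instances containing `u`. -/
def motifDeg (MI : Finset (Finset V)) (u : V) : ℕ :=
  (MI.filter fun T => u ∈ T).card

/-- Number of motif instances containing `u` with exactly `j` vertices in `C`. -/
def motifDegIn (MI : Finset (Finset V)) (C : Finset V) (j : ℕ) (u : V) : ℕ :=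
  (MI.filter fun T => u ∈ T ∧ (T ∩ C).card = j).card

/-- Motif cut: number of motif instances with a vertex in `C` and a vertex outside `C`. -/
def motifCut (MI : Finset (Finset V)) (C : Finset V) : ℕ :=
  (MI.filter fun T => (T ∩ C).Nonempty ∧ (T \ C).Nonempty).card

/-- Motif volume of `C`. -/
def motifVol (MI : Finset (Finset V)) (C : Finset V) : ℕ :=
  ∑ u ∈ C, motifDeg MI u

/-- g_M(S) = (vol - cut)/vol. -/
def gM (MI : Finset (Finset V)) (S : Finset V) : ℚ :=
  ((motifVol MI S : ℚ) - (motifCut MI S : ℚ)) / (motifVol MI S : ℚ)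

/-- Motif conductance. -/
def phiM (MI : Finset (Finset V)) (S : Finset V) : ℚ :=
  (motifCut MI S : ℚ) / ((min (motifVol MI S) (motifVol MI Sᶜ) : ℕ) : ℚ)

/-- Motif resident of `u` w.r.t. `S` for a motif with `k` vertices. -/
def motifRes (MI : Finset (Finset V)) (k : ℕ) (S : Finset V) (u : V) : ℚ :=
  ((motifDeg MI u : ℚ) + (motifDegIn MI S k u : ℚ) - (motifDegIn MI S 1 u : ℚ)) /
    (motifDeg MI u : ℚ)

/-- cut_M(S \ {u}) = cut_M(S) − M_1^S(u) + M_k^S(u). -/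
theorem motifCut_erase (MI : Finset (Finset V)) (k : ℕ)
    (hk : ∀ T ∈ MI, T.card = k) (S : Finset V) (u : V) (hu : u ∈ S) :
    (motifCut MI (S.erase u) : ℤ) =
      (motifCut MI S : ℤ) - (motifDegIn MI S 1 u : ℤ) + (motifDegIn MI S k u : ℤ) := by
  classical
  unfold motifCut motifDegIn
  rw [Finset.card_filter, Finset.card_filter, Finset.card_filter, Finset.card_filter]
  push_cast
  rw [← Finset.sum_sub_distrib, ← Finset.sum_add_distrib]
  refine Finset.sum_congr rfl fun T hT => ?_
  have hcard := hk T hT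
  by_cases huT : u ∈ T
  · have hm1 : u ∈ T ∩ S := Finset.mem_inter.mpr ⟨huT, hu⟩
    have hne : (T ∩ S).Nonempty := ⟨u, hm1⟩
    have hmpos : 1 ≤ (T ∩ S).card := Finset.card_pos.mpr hne
    have hmle : (T ∩ S).card ≤ k := hcard ▸ Finset.card_le_card Finset.inter_subset_left
    have hie : T ∩ S.erase u = (T ∩ S).erase u := by
      ext x; simp only [Finset.mem_inter, Finset.mem_erase]; tauto
    have hcarde : (T ∩ S.erase u).card = (T ∩ S).card - 1 := by
      rw [hie, Finset.card_erase_of_mem hm1]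
    have h1 : (T ∩ S.erase u).Nonempty ↔ 2 ≤ (T ∩ S).card := by
      rw [← Finset.card_pos, hcarde]; omega
    have h2 : (T \ S.erase u).Nonempty := ⟨u, Finset.mem_sdiff.mpr ⟨huT, Finset.notMem_erase u S⟩⟩
    have h3 : (T \ S).Nonempty ↔ (T ∩ S).card < k := by
      rw [Finset.sdiff_nonempty]
      constructor
      · intro h
        rcases lt_or_eq_of_le hmle with h' | h'
        · exact h'
        · have heq : T ∩ S = T := Finset.eq_of_subset_of_card_le
            Finset.inter_subset_left (by rw [h', hcard])
          exact absurd (Finset.inter_eq_left.mp heq) h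
      · intro h hsub
        have : T ∩ S = T := Finset.inter_eq_left.mpr hsub
        rw [this, hcard] at h; omega
    simp only [h1, h3, h2, hne, huT, and_true, true_and]
    split_ifs <;> omega
  · have hie : T ∩ S.erase u = T ∩ S := by
      ext x; simp only [Finset.mem_inter, Finset.mem_erase]
      constructor
      · rintro ⟨hx, _, hxS⟩; exact ⟨hx, hxS⟩
      · rintro ⟨hx, hxS⟩; exact ⟨hx, fun h => huT (h ▸ hx), hxS⟩
    have hse : T \ S.erase u = T \ S := by
      ext x; simp only [Finset.mem_sdiff, Finset.mem_erase]
      constructor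
      · rintro ⟨hx, h⟩; exact ⟨hx, fun hxS => h ⟨fun h' => huT (h' ▸ hx), hxS⟩⟩
      · rintro ⟨hx, h⟩; exact ⟨hx, fun ⟨_, hxS⟩ => h hxS⟩
    simp [hie, hse, huT]
end

section
/- Let S̃ be a set maximizing g_M over all subsets of V. Then for every vertex u ∈ S̃, the motif resident value Mr_{S̃}(u) = (M(u) + M_k^{S̃}(u) − M_1^{S̃}(u))/M(u) is at least g_M(S̃). -/
open Finset

variable {V : Type*} [Fintype V] [DecidableEq V]

omit [Fintype V] in
lemma cut_erase_aux (MI : Finset (Finset V)) (k : ℕ) (hk : ∀ T ∈ MI, T.card = k)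
    (S : Finset V) (u : V) (hu : u ∈ S) :
    motifCut MI (S.erase u) + motifDegIn MI S 1 u
      = motifCut MI S + motifDegIn MI S k u := by
  unfold motifCut motifDegIn
  rw [Finset.card_filter, Finset.card_filter, Finset.card_filter, Finset.card_filter,
    ← Finset.sum_add_distrib, ← Finset.sum_add_distrib]
  refine Finset.sum_congr rfl fun T hT => ?_
  have hTk := hk T hT
  have h2 : (T ∩ S).card + (T \ S).card = k := by
    rw [Finset.card_inter_add_card_sdiff, hTk]
  by_cases hu' : u ∈ T
  · have he : T ∩ S.erase u = (T ∩ S).erase u := by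
      ext x
      simp only [Finset.mem_inter, Finset.mem_erase]
      tauto
    have huTS : u ∈ T ∩ S := Finset.mem_inter.mpr ⟨hu', hu⟩
    have h3 : (T ∩ S.erase u).card = (T ∩ S).card - 1 := by
      rw [he, Finset.card_erase_of_mem huTS]
    have h4 : (T ∩ S.erase u).card + (T \ S.erase u).card = k := by
      rw [Finset.card_inter_add_card_sdiff, hTk]
    have h5 : 1 ≤ (T ∩ S).card := Finset.card_pos.mpr ⟨u, huTS⟩
    simp only [← Finset.card_pos, hu', true_and]
    split_ifs <;> omega
  · have h1 : T ∩ S.erase u = T ∩ S := by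
      ext x
      simp only [Finset.mem_inter, Finset.mem_erase]
      constructor
      · rintro ⟨hx, _, hx2⟩; exact ⟨hx, hx2⟩
      · rintro ⟨hx, hx2⟩
        exact ⟨hx, fun h => hu' (h ▸ hx), hx2⟩
    have h1' : T \ S.erase u = T \ S := by
      ext x
      simp only [Finset.mem_sdiff, Finset.mem_erase]
      constructor
      · rintro ⟨hx, hx2⟩
        refine ⟨hx, fun hxS => hx2 ⟨fun h => hu' (h ▸ hx), hxS⟩⟩
      · rintro ⟨hx, hx2⟩
        exact ⟨hx, fun h => hx2 h.2⟩
    simp [h1, h1', hu']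

/-- If S̃ maximizes g_M, then every u ∈ S̃ has motif resident at least g_M(S̃). -/
theorem motifRes_ge_gM_of_opt (MI : Finset (Finset V)) (k : ℕ)
    (hk : ∀ T ∈ MI, T.card = k) (St : Finset V)
    (hopt : ∀ S : Finset V, gM MI S ≤ gM MI St)
    (hdeg : ∀ u ∈ St, 0 < motifDeg MI u) :
    ∀ u ∈ St, gM MI St ≤ motifRes MI k St u := by
  intro u hu
  have hd := hdeg u hu
  have hvol : motifVol MI (St.erase u) + motifDeg MI u = motifVol MI St :=
    Finset.sum_erase_add _ _ hu
  have hcut := cut_erase_aux MI k hk St u hu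
  set v : ℚ := (motifVol MI St : ℚ) with hv_def
  set d : ℚ := (motifDeg MI u : ℚ) with hd_def
  set c : ℚ := (motifCut MI St : ℚ) with hc_def
  set a : ℚ := (motifDegIn MI St k u : ℚ) with ha_def
  set b : ℚ := (motifDegIn MI St 1 u : ℚ) with hb_def
  have hdq : 0 < d := by rw [hd_def]; exact_mod_cast hd
  have hdv : d ≤ v := by
    have : motifDeg MI u ≤ motifVol MI St :=
      Finset.single_le_sum (fun i _ => Nat.zero_le _) hu
    rw [hd_def, hv_def]; exact_mod_cast this
  have hv : 0 < v := lt_of_lt_of_le hdq hdv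
  have hvolq : (motifVol MI (St.erase u) : ℚ) = v - d := by
    rw [hv_def, hd_def]; push_cast [← hvol]; ring
  have hcutq : (motifCut MI (St.erase u) : ℚ) + b = c + a := by
    rw [hb_def, hc_def, ha_def]; exact_mod_cast hcut
  have hcut0 : (0 : ℚ) ≤ (motifCut MI (St.erase u) : ℚ) := by positivity
  have key : v * (b - a) ≤ d * c := by
    by_cases hv' : motifVol MI (St.erase u) = 0
    · have hvd : v = d := by
        have : (motifVol MI (St.erase u) : ℚ) = 0 := by exact_mod_cast hv'
        rw [this] at hvolq; linarith
      have hba : b - a ≤ c := by linarith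
      nlinarith
    · have hv'q : (0 : ℚ) < (motifVol MI (St.erase u) : ℚ) := by
        exact_mod_cast Nat.pos_of_ne_zero hv'
      have h := hopt (St.erase u)
      unfold gM at h
      rw [div_le_div_iff₀ hv'q hv] at h
      rw [hvolq] at h hv'q
      nlinarith [h, hcutq, hcut0]
  unfold gM motifRes
  rw [div_le_div_iff₀ hv hdq]
  nlinarith [key]
end

section
/- For any vertex set V_t such that every u ∈ V_t satisfies (M(u) + M_k^{V_t}(u) − M_1^{V_t}(u))/M(u) ≥ c for some constant c ≥ 0, it holds that g_M(V_t) ≥ c/2. -/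
open Finset

variable {V : Type*} [Fintype V] [DecidableEq V]

lemma motifDegIn_le_motifDeg (MI : Finset (Finset V)) (C : Finset V) (j : ℕ) (u : V) :
    motifDegIn MI C j u ≤ motifDeg MI u := by
  apply Finset.card_le_card
  intro T hT
  simp only [Finset.mem_filter] at hT ⊢
  exact ⟨hT.1, hT.2.1⟩

lemma sum_motifDeg (MI : Finset (Finset V)) (Vt : Finset V) :
    ∑ u ∈ Vt, motifDeg MI u = ∑ T ∈ MI, (T ∩ Vt).card := by
  unfold motifDeg
  simp_rw [Finset.card_filter]
  rw [Finset.sum_comm]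
  refine Finset.sum_congr rfl fun T _ => ?_
  rw [← Finset.card_filter, Finset.filter_mem_eq_inter, Finset.inter_comm]

lemma sum_motifDegIn (MI : Finset (Finset V)) (Vt : Finset V) (j : ℕ) :
    ∑ u ∈ Vt, motifDegIn MI Vt j u
      = ∑ T ∈ MI, if (T ∩ Vt).card = j then j else 0 := by
  unfold motifDegIn
  simp_rw [Finset.card_filter]
  rw [Finset.sum_comm]
  refine Finset.sum_congr rfl fun T _ => ?_
  by_cases h : (T ∩ Vt).card = j
  · simp only [h, and_true, if_true]
    rw [← Finset.card_filter, Finset.filter_mem_eq_inter, Finset.inter_comm, h]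
  · simp [h]

lemma motifCut_eq_sum (MI : Finset (Finset V)) (k : ℕ) (hk : ∀ T ∈ MI, T.card = k)
    (Vt : Finset V) :
    motifCut MI Vt
      = ∑ T ∈ MI, if 0 < (T ∩ Vt).card ∧ (T ∩ Vt).card < k then 1 else 0 := by
  unfold motifCut
  rw [Finset.card_filter]
  refine Finset.sum_congr rfl fun T hT => ?_
  have h1 : (T ∩ Vt).card + (T \ Vt).card = T.card :=
    Finset.card_inter_add_card_sdiff T Vt
  have hTk := hk T hT
  congr 1
  simp only [eq_iff_iff]
  constructor
  · rintro ⟨h2, h3⟩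
    have := Finset.card_pos.mpr h2
    have := Finset.card_pos.mpr h3
    omega
  · rintro ⟨h2, h3⟩
    exact ⟨Finset.card_pos.mp h2, Finset.card_pos.mp (by omega)⟩

/-- If every vertex of V_t has motif resident at least c ≥ 0, then g_M(V_t) ≥ c/2. -/
theorem gM_ge_half_of_res (MI : Finset (Finset V)) (k : ℕ)
    (hk : ∀ T ∈ MI, T.card = k) (hk2 : 2 ≤ k)
    (Vt : Finset V) (hvol : 0 < motifVol MI Vt) (c : ℚ) (hc : 0 ≤ c)
    (hres : ∀ u ∈ Vt, c ≤ motifRes MI k Vt u) :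
    c / 2 ≤ gM MI Vt := by
  classical
  have hvolQ : (0 : ℚ) < (motifVol MI Vt : ℚ) := by exact_mod_cast hvol
  -- per-vertex inequality summed up
  have key : c * (motifVol MI Vt : ℚ)
      ≤ ∑ u ∈ Vt, ((motifDeg MI u : ℚ) + (motifDegIn MI Vt k u : ℚ)
          - (motifDegIn MI Vt 1 u : ℚ)) := by
    unfold motifVol
    push_cast
    rw [Finset.mul_sum]
    refine Finset.sum_le_sum fun u hu => ?_
    have h := hres u hu
    unfold motifRes at h
    by_cases hM : motifDeg MI u = 0
    · have h1 : motifDegIn MI Vt k u = 0 :=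
        Nat.le_zero.mp (hM ▸ motifDegIn_le_motifDeg MI Vt k u)
      have h2 : motifDegIn MI Vt 1 u = 0 :=
        Nat.le_zero.mp (hM ▸ motifDegIn_le_motifDeg MI Vt 1 u)
      simp [hM, h1, h2]
    · have hMpos : (0 : ℚ) < (motifDeg MI u : ℚ) := by
        exact_mod_cast Nat.pos_of_ne_zero hM
      rw [le_div_iff₀ hMpos] at h
      linarith
  -- combinatorial inequality over motif instances
  have hnat : (∑ T ∈ MI, if (T ∩ Vt).card = k then k else 0) + 2 * motifCut MI Vt
      ≤ (∑ T ∈ MI, (T ∩ Vt).card)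
        + (∑ T ∈ MI, if (T ∩ Vt).card = 1 then 1 else 0) := by
    rw [motifCut_eq_sum MI k hk Vt, Finset.mul_sum, ← Finset.sum_add_distrib,
      ← Finset.sum_add_distrib]
    refine Finset.sum_le_sum fun T hT => ?_
    have hj : (T ∩ Vt).card ≤ k :=
      (hk T hT) ▸ Finset.card_le_card Finset.inter_subset_left
    split_ifs <;> omega
  -- rewrite the summed inequality
  have hvolsum : motifVol MI Vt = ∑ T ∈ MI, (T ∩ Vt).card := sum_motifDeg MI Vt
  have hMk := sum_motifDegIn MI Vt k
  have hM1 := sum_motifDegIn MI Vt 1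
  have key2 : c * (motifVol MI Vt : ℚ)
      ≤ (motifVol MI Vt : ℚ)
        + ((∑ T ∈ MI, if (T ∩ Vt).card = k then k else 0 : ℕ) : ℚ)
        - ((∑ T ∈ MI, if (T ∩ Vt).card = 1 then 1 else 0 : ℕ) : ℚ) := by
    refine key.trans (le_of_eq ?_)
    have e1 : ∑ u ∈ Vt, (motifDeg MI u : ℚ) = (motifVol MI Vt : ℚ) :=
      (Nat.cast_sum _ _).symm
    have e2 : ∑ u ∈ Vt, (motifDegIn MI Vt k u : ℚ)
        = ((∑ T ∈ MI, if (T ∩ Vt).card = k then k else 0 : ℕ) : ℚ) := by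
      rw [← Nat.cast_sum, hMk]
    have e3 : ∑ u ∈ Vt, (motifDegIn MI Vt 1 u : ℚ)
        = ((∑ T ∈ MI, if (T ∩ Vt).card = 1 then 1 else 0 : ℕ) : ℚ) := by
      rw [← Nat.cast_sum, hM1]
    rw [Finset.sum_sub_distrib, Finset.sum_add_distrib, e1, e2, e3]
  have hnatQ : ((∑ T ∈ MI, if (T ∩ Vt).card = k then k else 0 : ℕ) : ℚ)
      + 2 * (motifCut MI Vt : ℚ)
      ≤ (motifVol MI Vt : ℚ)
        + ((∑ T ∈ MI, if (T ∩ Vt).card = 1 then 1 else 0 : ℕ) : ℚ) := by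
    rw [show (motifVol MI Vt : ℚ) = ((∑ T ∈ MI, (T ∩ Vt).card : ℕ) : ℚ) by
      rw [← hvolsum]]
    exact_mod_cast hnat
  rw [gM, le_div_iff₀ hvolQ]
  linarith
end

section
/- When a vertex u is removed from S, the motif resident of any remaining vertex v updates as Mr_{S\{u}}(v) = Mr_S(v) − (M_k^S(u,v) + M_2^S(u,v))/M(v), where M_k^S(u,v) and M_2^S(u,v) count motif instances containing both u and v with exactly k resp. 2 vertices in S. -/
open Finset

variable {V : Type*} [Fintype V] [DecidableEq V]

/-- Number of motif instances containing both u and v with exactly j vertices in S. -/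
def motifDegPair (MI : Finset (Finset V)) (S : Finset V) (j : ℕ) (u v : V) : ℕ :=
  (MI.filter fun T => u ∈ T ∧ v ∈ T ∧ (T ∩ S).card = j).card

private lemma inter_erase_of_notMem' (T S : Finset V) (u : V) (h : u ∉ T) :
    T ∩ S.erase u = T ∩ S := by
  rw [Finset.inter_erase,
    Finset.erase_eq_of_notMem (fun hm => h (Finset.mem_of_mem_inter_left hm))]

private lemma degIn_split (MI : Finset (Finset V)) (S' : Finset V) (j : ℕ) (u v : V) :
    motifDegIn MI S' j v =
      (MI.filter fun T => (v ∈ T ∧ (T ∩ S').card = j) ∧ u ∈ T).card +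
      (MI.filter fun T => (v ∈ T ∧ (T ∩ S').card = j) ∧ u ∉ T).card := by
  classical
  unfold motifDegIn
  have h := Finset.card_filter_add_card_filter_not
    (s := MI.filter fun T => v ∈ T ∧ (T ∩ S').card = j) (p := fun T => u ∈ T)
  rw [Finset.filter_filter, Finset.filter_filter] at h
  omega

private lemma degIn_k_eq (MI : Finset (Finset V)) (k : ℕ)
    (hk : ∀ T ∈ MI, T.card = k) (S : Finset V) (u v : V) (hu : u ∈ S) :
    motifDegIn MI (S.erase u) k v + motifDegPair MI S k u v = motifDegIn MI S k v := by
  classical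
  rw [degIn_split MI (S.erase u) k u v, degIn_split MI S k u v]
  have h1 : (MI.filter fun T => (v ∈ T ∧ (T ∩ S.erase u).card = k) ∧ u ∈ T) = ∅ := by
    rw [Finset.filter_eq_empty_iff]
    rintro T hT ⟨⟨-, hcard⟩, huT⟩
    have hsub : T ∩ S.erase u ⊆ T := Finset.inter_subset_left
    have heq : T ∩ S.erase u = T :=
      Finset.eq_of_subset_of_card_le hsub (by rw [hk T hT, hcard])
    have : u ∈ T ∩ S.erase u := by rw [heq]; exact huT
    exact (Finset.notMem_erase u S) (Finset.mem_of_mem_inter_right this)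
  have h2 : (MI.filter fun T => (v ∈ T ∧ (T ∩ S.erase u).card = k) ∧ u ∉ T) =
      (MI.filter fun T => (v ∈ T ∧ (T ∩ S).card = k) ∧ u ∉ T) := by
    apply Finset.filter_congr
    intro T hT
    constructor
    · rintro ⟨⟨hvT, hcard⟩, huT⟩
      refine ⟨⟨hvT, ?_⟩, huT⟩
      rwa [inter_erase_of_notMem' T S u huT] at hcard
    · rintro ⟨⟨hvT, hcard⟩, huT⟩
      refine ⟨⟨hvT, ?_⟩, huT⟩
      rw [inter_erase_of_notMem' T S u huT]; exact hcard
  have h3 : (MI.filter fun T => (v ∈ T ∧ (T ∩ S).card = k) ∧ u ∈ T) =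
      (MI.filter fun T => u ∈ T ∧ v ∈ T ∧ (T ∩ S).card = k) := by
    apply Finset.filter_congr; intro T _; tauto
  rw [h1, h2, h3]
  unfold motifDegPair
  simp only [Finset.card_empty]
  omega

private lemma degIn_one_eq (MI : Finset (Finset V)) (S : Finset V) (u v : V)
    (hu : u ∈ S) (hv : v ∈ S) (hvu : v ≠ u) :
    motifDegIn MI (S.erase u) 1 v = motifDegIn MI S 1 v + motifDegPair MI S 2 u v := by
  classical
  rw [degIn_split MI (S.erase u) 1 u v, degIn_split MI S 1 u v]
  have h1 : (MI.filter fun T => (v ∈ T ∧ (T ∩ S).card = 1) ∧ u ∈ T) = ∅ := by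
    rw [Finset.filter_eq_empty_iff]
    rintro T hT ⟨⟨hvT, hcard⟩, huT⟩
    have hsub : {v, u} ⊆ T ∩ S := by
      intro x hx
      rcases Finset.mem_insert.mp hx with rfl | hx
      · exact Finset.mem_inter.mpr ⟨hvT, hv⟩
      · rw [Finset.mem_singleton] at hx; subst hx
        exact Finset.mem_inter.mpr ⟨huT, hu⟩
    have := Finset.card_le_card hsub
    rw [Finset.card_pair hvu, hcard] at this
    omega
  have h2 : (MI.filter fun T => (v ∈ T ∧ (T ∩ S.erase u).card = 1) ∧ u ∉ T) =
      (MI.filter fun T => (v ∈ T ∧ (T ∩ S).card = 1) ∧ u ∉ T) := by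
    apply Finset.filter_congr
    intro T _
    have : ∀ (huT : u ∉ T), T ∩ S.erase u = T ∩ S :=
      fun huT => inter_erase_of_notMem' T S u huT
    constructor
    · rintro ⟨⟨hvT, hcard⟩, huT⟩; exact ⟨⟨hvT, by rwa [this huT] at hcard⟩, huT⟩
    · rintro ⟨⟨hvT, hcard⟩, huT⟩; exact ⟨⟨hvT, by rwa [this huT]⟩, huT⟩
  have h3 : (MI.filter fun T => (v ∈ T ∧ (T ∩ S.erase u).card = 1) ∧ u ∈ T) =
      (MI.filter fun T => u ∈ T ∧ v ∈ T ∧ (T ∩ S).card = 2) := by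
    apply Finset.filter_congr
    intro T _
    have key : ∀ (huT : u ∈ T), (T ∩ S.erase u).card = (T ∩ S).card - 1 ∧ 0 < (T ∩ S).card := by
      intro huT
      have huTS : u ∈ T ∩ S := Finset.mem_inter.mpr ⟨huT, hu⟩
      constructor
      · rw [Finset.inter_erase, Finset.card_erase_of_mem huTS]
      · exact Finset.card_pos.mpr ⟨u, huTS⟩
    constructor
    · rintro ⟨⟨hvT, hcard⟩, huT⟩
      obtain ⟨he, hpos⟩ := key huT
      exact ⟨huT, hvT, by omega⟩
    · rintro ⟨huT, hvT, hcard⟩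
      obtain ⟨he, hpos⟩ := key huT
      exact ⟨⟨hvT, by omega⟩, huT⟩
  rw [h1, h2, h3]
  unfold motifDegPair
  simp only [Finset.card_empty]
  omega

/-- Dynamic update of the motif resident when u is removed from S. -/
theorem motifRes_update (MI : Finset (Finset V)) (k : ℕ)
    (hk : ∀ T ∈ MI, T.card = k) (S : Finset V) (u v : V)
    (hu : u ∈ S) (hv : v ∈ S) (hvu : v ≠ u) (hdeg : 0 < motifDeg MI v) :
    motifRes MI k (S.erase u) v =
      motifRes MI k S v -
        ((motifDegPair MI S k u v : ℚ) + (motifDegPair MI S 2 u v : ℚ)) /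
          (motifDeg MI v : ℚ) := by
  have hA := degIn_k_eq MI k hk S u v hu
  have hB := degIn_one_eq MI S u v hu hv hvu
  have hd : (motifDeg MI v : ℚ) ≠ 0 := by positivity
  unfold motifRes
  have hA' : (motifDegIn MI (S.erase u) k v : ℚ) =
      (motifDegIn MI S k v : ℚ) - (motifDegPair MI S k u v : ℚ) := by
    have := congrArg (Nat.cast (R := ℚ)) hA; push_cast at this ⊢; linarith
  have hB' : (motifDegIn MI (S.erase u) 1 v : ℚ) =
      (motifDegIn MI S 1 v : ℚ) + (motifDegPair MI S 2 u v : ℚ) := by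
    exact_mod_cast congrArg (Nat.cast (R := ℚ)) hB
  rw [hA', hB']
  field_simp
  ring
end
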